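/- Let P be the 3×3 integer matrix with columns (0,0,1), (0,1,1), (1,1,0), i.e. with rows (0,0,1), (0,1,1), (1,1,0). Then P is invertible and for every integer k ≥ 1 one has B₃(k)·P = P·Z₃(k), i.e. Z₃(k) = P⁻¹·B₃(k)·P. In particular, for every k ≥ 1 the matrices Z₃(k) and B₃(k) have the same characteristic polynomial and the same eigenvalues. -/

import Mathlib

/-- The matrix `B₃(k)` (over `ℤ`) with rows `(0, 1, 0)`, `(1, 0, 1)`, `(k−1, 0, k)`. -/
def B3 (k : ℤ) : Matrix (Fin 3) (Fin 3) ℤ :=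
  !![0, 1, 0; 1, 0, 1; k - 1, 0, k]

/-- The matrix `Z₃(k)` (over `ℤ`) with rows `(k−1, k, k−1)`, `(1, 0, 0)`, `(0, 1, 1)`. -/
def Z3 (k : ℤ) : Matrix (Fin 3) (Fin 3) ℤ :=
  !![k - 1, k, k - 1; 1, 0, 0; 0, 1, 1]

/-- The change-of-basis matrix `P` with rows `(0,0,1)`, `(0,1,1)`, `(1,1,0)`. -/
def P : Matrix (Fin 3) (Fin 3) ℤ :=
  !![0, 0, 1; 0, 1, 1; 1, 1, 0]

namespace Matrix

variable {n R : Type*} [Fintype n] [DecidableEq n] [CommRing R]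

theorem eq_nonsing_inv_mul_mul_of_mul_eq_mul {A B Q : Matrix n n R} (hQ : IsUnit Q)
    (h : A * Q = Q * B) : B = Q⁻¹ * A * Q := by
  rw [mul_assoc, h, nonsing_inv_mul_cancel_left Q B ((isUnit_iff_isUnit_det Q).mp hQ)]

theorem charpoly_nonsing_inv_mul_mul {Q : Matrix n n R} (hQ : IsUnit Q) (A : Matrix n n R) :
    (Q⁻¹ * A * Q).charpoly = A.charpoly := by
  simpa only [hQ.unit_spec] using charpoly_units_conj' hQ.unit A

end Matrix

theorem det_P : P.det = -1 := by
  simp [P, Matrix.det_fin_three]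

theorem isUnit_P : IsUnit P :=
  (Matrix.isUnit_iff_isUnit_det P).mpr (det_P ▸ isUnit_one.neg)

theorem B3_mul_P (k : ℤ) : B3 k * P = P * Z3 k := by
  rw [B3, P, Z3, Matrix.mul_fin_three, Matrix.mul_fin_three]
  congr 1
  ring_nf

/-- `P` is invertible, conjugates `Z₃(k)` to `B₃(k)` for every `k ≥ 1`, and in particular
`Z₃(k)` and `B₃(k)` have the same characteristic polynomial, hence the same eigenvalues. -/
theorem Z3_conjugate_B3 :
    IsUnit P ∧
    ∀ k : ℤ, 1 ≤ k →
      B3 k * P = P * Z3 k ∧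
      Z3 k = P⁻¹ * B3 k * P ∧
      (Z3 k).charpoly = (B3 k).charpoly := by
  refine ⟨isUnit_P, fun k _ => ?_⟩
  have hconj := Matrix.eq_nonsing_inv_mul_mul_of_mul_eq_mul isUnit_P (B3_mul_P k)
  refine ⟨B3_mul_P k, hconj, ?_⟩
  rw [hconj, Matrix.charpoly_nonsing_inv_mul_mul isUnit_P]
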